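/- arXiv:1212.2331 — 9 statements merged into one kernel-verified Lean document; each statement's English description precedes it below -/
import Mathlib

section
/- Let n ≥ 1 and G = ℝⁿ \ {0}. For all x, y ∈ G one has s_G(x,y) ≤ (1/log 3) · j_G(x,y), i.e. log 3 · |x−y|/(|x|+|y|) ≤ log(1 + |x−y|/min{|x|,|y|}). -/
/-!
With `t = |x - y| / (|x| + |y|) ∈ [0, 1]`, concavity of `log` (in the form of Bernoulli's
inequality `3 ^ t ≤ 1 + 2 t`) gives `t log 3 ≤ log (1 + 2 t)`, and `2 t ≤ |x - y| / min {|x|, |y|}`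
since `|x| + |y| ≥ 2 min {|x|, |y|}`.
-/

open Real

theorem mul_log_one_add_le_log_one_add_mul {s p : ℝ} (hs : -1 < s) (hp₀ : 0 ≤ p) (hp₁ : p ≤ 1) :
    p * log (1 + s) ≤ log (1 + p * s) := by
  have hs' : 0 < 1 + s := by linarith
  rw [← log_rpow hs']
  exact log_le_log (rpow_pos_of_pos hs' p) (rpow_one_add_le_one_add_mul_self hs.le hp₀ hp₁)

theorem two_mul_div_add_le_div_min {a b d : ℝ} (ha : 0 < a) (hb : 0 < b) (hd : 0 ≤ d) :
    2 * (d / (a + b)) ≤ d / min a b := by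
  rw [mul_div_assoc', div_le_div_iff₀ (by positivity) (lt_min ha hb)]
  nlinarith [min_le_left a b, min_le_right a b]

theorem s_le_inv_log_three_mul_j_punctured_general (n : ℕ)
    (x y : EuclideanSpace ℝ (Fin n)) (hx : x ≠ 0) (hy : y ≠ 0) :
    Real.log 3 * (dist x y / (‖x‖ + ‖y‖)) ≤
      Real.log (1 + dist x y / min ‖x‖ ‖y‖) := by
  set t := dist x y / (‖x‖ + ‖y‖)
  have hx' : 0 < ‖x‖ := norm_pos_iff.mpr hx
  have hy' : 0 < ‖y‖ := norm_pos_iff.mpr hy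
  have ht₀ : 0 ≤ t := by positivity
  have ht₁ : t ≤ 1 := div_le_one_of_le₀ (dist_le_norm_add_norm x y) (by positivity)
  calc Real.log 3 * t = t * Real.log (1 + 2) := by norm_num [mul_comm]
    _ ≤ Real.log (1 + t * 2) := mul_log_one_add_le_log_one_add_mul (by norm_num) ht₀ ht₁
    _ ≤ Real.log (1 + dist x y / min ‖x‖ ‖y‖) := by
      gcongr
      linarith [two_mul_div_add_le_div_min hx' hy' (dist_nonneg (x := x) (y := y))]

/-- Let n ≥ 1 and G = ℝⁿ \ {0}. For all x, y ∈ G one has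
s_G(x,y) ≤ (1/log 3) · j_G(x,y), i.e.
log 3 · |x−y|/(|x|+|y|) ≤ log(1 + |x−y|/min{|x|,|y|}). -/
theorem s_le_inv_log_three_mul_j_punctured (n : ℕ) (hn : 1 ≤ n)
    (x y : EuclideanSpace ℝ (Fin n)) (hx : x ≠ 0) (hy : y ≠ 0) :
    Real.log 3 * (dist x y / (‖x‖ + ‖y‖)) ≤
      Real.log (1 + dist x y / min ‖x‖ ‖y‖) :=
  s_le_inv_log_three_mul_j_punctured_general n x y hx hy
end

section
/- Let G ⊊ ℝⁿ be a domain (nonempty, open, connected, proper subset). Then for all x, y ∈ G one has s_G(x,y) ≤ (1/log 2) · j_G(x,y). -/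
/-- The triangular ratio metric `s_G(x,y) = sup_{z ∈ ∂G} |x−y|/(|z−x|+|z−y|)`. -/
noncomputable def sMetric {n : ℕ} (G : Set (EuclideanSpace ℝ (Fin n)))
    (x y : EuclideanSpace ℝ (Fin n)) : ℝ :=
  ⨆ z ∈ frontier G, dist x y / (dist z x + dist z y)

/-- The j-metric `j_G(x,y) = log(1 + |x−y|/min{d_G(x), d_G(y)})`,
where `d_G(z) = dist(z, ∂G)`. -/
noncomputable def jMetric {n : ℕ} (G : Set (EuclideanSpace ℝ (Fin n)))
    (x y : EuclideanSpace ℝ (Fin n)) : ℝ :=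
  Real.log (1 + dist x y /
    min (Metric.infDist x (frontier G)) (Metric.infDist y (frontier G)))

/-!
Write `t = |x - y|` and `m = min {d_G(x), d_G(y)}`. For `z ∈ ∂G` the denominator
`|z - x| + |z - y|` is at least `t` (triangle inequality) and at least `m`, so each quotient
in `s_G` is at most `min (t/m) 1`. Bernoulli's inequality `2 ^ u ≤ 1 + u` on `[0, 1]`
gives `min u 1 * log 2 ≤ log (1 + u)` for all `u ≥ 0`, i.e. `min (t/m) 1 ≤ j_G(x,y) / log 2`.
-/

open Metric

namespace Real

theorem mul_log_two_le_log_one_add {u : ℝ} (hu₀ : 0 ≤ u) (hu₁ : u ≤ 1) :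
    u * log 2 ≤ log (1 + u) := by
  have bernoulli : (2 : ℝ) ^ u ≤ 1 + u := by
    simpa [one_add_one_eq_two] using
      rpow_one_add_le_one_add_mul_self (s := 1) (by norm_num) hu₀ hu₁
  calc u * log 2 = log (2 ^ u) := (log_rpow two_pos u).symm
    _ ≤ log (1 + u) := log_le_log (by positivity) bernoulli

theorem min_one_mul_log_two_le_log_one_add {u : ℝ} (hu : 0 ≤ u) :
    min u 1 * log 2 ≤ log (1 + u) := by
  rcases le_total u 1 with hu₁ | hu₁
  · rw [min_eq_left hu₁]
    exact mul_log_two_le_log_one_add hu hu₁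
  · rw [min_eq_right hu₁, one_mul]
    exact log_le_log two_pos (by linarith)

end Real

theorem div_dist_add_dist_le_min {α : Type*} [PseudoMetricSpace α] {F : Set α}
    (hF : IsClosed F) {x y z : α} (hz : z ∈ F) (hx : x ∉ F) (hy : y ∉ F) :
    dist x y / (dist z x + dist z y) ≤ min (dist x y / min (infDist x F) (infDist y F)) 1 := by
  have hm : 0 < min (infDist x F) (infDist y F) :=
    lt_min ((hF.notMem_iff_infDist_pos ⟨z, hz⟩).1 hx) ((hF.notMem_iff_infDist_pos ⟨z, hz⟩).1 hy)
  have hzx : min (infDist x F) (infDist y F) ≤ dist z x :=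
    (min_le_left _ _).trans (dist_comm z x ▸ infDist_le_dist_of_mem hz)
  have htri : dist x y ≤ dist z x + dist z y := dist_comm z x ▸ dist_triangle x z y
  refine le_min (div_le_div_of_nonneg_left dist_nonneg hm ?_) ?_
  · linarith [dist_nonneg (x := z) (y := y)]
  · exact div_le_one_of_le₀ htri (by positivity)

theorem s_le_inv_log_two_mul_j_general (n : ℕ) (G : Set (EuclideanSpace ℝ (Fin n)))
    (hGo : IsOpen G)
    (x y : EuclideanSpace ℝ (Fin n)) (hx : x ∈ G) (hy : y ∈ G) :
    sMetric G x y ≤ (1 / Real.log 2) * jMetric G x y := by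
  have hlog2 : 0 < Real.log 2 := Real.log_pos one_lt_two
  have hu : 0 ≤ dist x y / min (infDist x (frontier G)) (infDist y (frontier G)) :=
    div_nonneg dist_nonneg (le_min infDist_nonneg infDist_nonneg)
  have hj : 0 ≤ jMetric G x y := Real.log_nonneg (by linarith)
  have hfr : Disjoint (frontier G) G := disjoint_frontier_iff_isOpen.2 hGo
  have hbound : 0 ≤ jMetric G x y / Real.log 2 := div_nonneg hj hlog2.le
  rw [one_div, ← div_eq_inv_mul]
  refine Real.iSup_le (fun z => Real.iSup_le (fun hz => ?_) hbound) hbound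
  calc dist x y / (dist z x + dist z y)
      ≤ min (dist x y / min (infDist x (frontier G)) (infDist y (frontier G))) 1 :=
        div_dist_add_dist_le_min isClosed_frontier hz
          (hfr.notMem_of_mem_right hx) (hfr.notMem_of_mem_right hy)
    _ ≤ jMetric G x y / Real.log 2 :=
        (le_div_iff₀ hlog2).2 (Real.min_one_mul_log_two_le_log_one_add hu)

/-- Let G ⊊ ℝⁿ be a domain (nonempty, open, connected, proper subset). Then for all
x, y ∈ G one has s_G(x,y) ≤ (1/log 2) · j_G(x,y). -/
theorem s_le_inv_log_two_mul_j (n : ℕ) (G : Set (EuclideanSpace ℝ (Fin n)))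
    (hGo : IsOpen G) (hGc : IsConnected G) (hGp : G ≠ Set.univ)
    (x y : EuclideanSpace ℝ (Fin n)) (hx : x ∈ G) (hy : y ∈ G) :
    sMetric G x y ≤ (1 / Real.log 2) * jMetric G x y :=
  s_le_inv_log_two_mul_j_general n G hGo x y hx hy
end

section
/- For all r ∈ (0, 1/2] and all α ∈ (0, arccos(1 − 2r²)), the inequality 1 + cos α − 2√2 · cos(α/2) · √(cos α + 2r² − 1) ≥ 0 holds. -/
/-! With `c = cos (α/2)` and `v = 2 (cos α + 2r² - 1)`, the expression equals `2 (c² - c √v)`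
because `1 + cos α = 2c²`. Now `r ≤ 1/2` gives `v ≤ c²`, and `c √v ≤ c²` whenever `v ≤ c²`,
whatever the sign of `c`. -/

theorem mul_sqrt_le_sq {c v : ℝ} (h : v ≤ c ^ 2) : c * √v ≤ c ^ 2 := by
  rcases le_total c 0 with hc | hc
  · exact (mul_nonpos_of_nonpos_of_nonneg hc (Real.sqrt_nonneg v)).trans (sq_nonneg c)
  · calc c * √v ≤ c * √(c ^ 2) := by gcongr
      _ = c ^ 2 := by rw [Real.sqrt_sq hc, sq]

theorem key_trig_inequality_general (r α : ℝ) (hr : r ∈ Set.Ioc (0:ℝ) (1/2)) :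
    1 + Real.cos α - 2 * Real.sqrt 2 * Real.cos (α/2) *
      Real.sqrt (Real.cos α + 2*r^2 - 1) ≥ 0 := by
  have hr_sq : r ^ 2 ≤ 1 / 4 := by nlinarith [hr.1, hr.2]
  have hcos_half : Real.cos (α/2) ^ 2 = 1/2 + Real.cos α / 2 := by
    rw [Real.cos_sq, mul_div_cancel₀ α two_ne_zero]
  have hrad : 2 * (Real.cos α + 2*r^2 - 1) ≤ Real.cos (α/2) ^ 2 := by
    rw [hcos_half]
    linarith [Real.cos_le_one α]
  have key := mul_sqrt_le_sq hrad
  rw [Real.sqrt_mul zero_le_two] at key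
  linear_combination 2 * key + 2 * hcos_half

/-- For all r ∈ (0, 1/2] and all α ∈ (0, arccos(1 − 2r²)), the inequality
1 + cos α − 2√2 · cos(α/2) · √(cos α + 2r² − 1) ≥ 0 holds. -/
theorem key_trig_inequality (r α : ℝ) (hr : r ∈ Set.Ioc (0:ℝ) (1/2))
    (hα : α ∈ Set.Ioo 0 (Real.arccos (1 - 2*r^2))) :
    1 + Real.cos α - 2 * Real.sqrt 2 * Real.cos (α/2) *
      Real.sqrt (Real.cos α + 2*r^2 - 1) ≥ 0 :=
  key_trig_inequality_general r α hr
end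

section
/- Let n ≥ 2, z ∈ ℝⁿ, G = ℝⁿ \ {z}, x ∈ G, and r ∈ (1/2, 1]. Then the metric ball B_s(x,r) = {y ∈ G : s_G(x,y) < r} is not a convex subset of ℝⁿ. -/
/-- The metric ball `B_s(x,r) = {y ∈ G : s_G(x,y) < r}`. -/
def sBall {n : ℕ} (G : Set (EuclideanSpace ℝ (Fin n))) (x : EuclideanSpace ℝ (Fin n))
    (r : ℝ) : Set (EuclideanSpace ℝ (Fin n)) :=
  {y ∈ G | sMetric G x y < r}

/-! On the segment from `z` to `x` the point `m = z + (1 - r)/(1 + r) • (x - z)` satisfies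
`|x - m| = r (|x - z| + |z - m|)`, i.e. `s(x, m) = r`, so `m` lies outside the ball. Pushing `m`
orthogonally to `x - z` by a short vector `±d` (this needs `n ≥ 2`) makes `s(x, m ± d) < r`,
exactly because `r > 1/2`; thus `m` is the midpoint of two points of the ball. -/

open scoped RealInnerProductSpace
open Module AffineMap

lemma sMetric_compl_singleton {n : ℕ} [Nontrivial (EuclideanSpace ℝ (Fin n))]
    (z x y : EuclideanSpace ℝ (Fin n)) :
    sMetric {z}ᶜ x y = dist x y / (dist z x + dist z y) := by
  have hfrontier : frontier ({z}ᶜ : Set (EuclideanSpace ℝ (Fin n))) = {z} := by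
    rw [frontier_compl, frontier, closure_singleton, interior_singleton, Set.sdiff_empty]
  have hnonneg : 0 ≤ dist x y / (dist z x + dist z y) := by positivity
  rw [sMetric, hfrontier]
  simp only [Set.mem_singleton_iff]
  refine le_antisymm (Real.iSup_le (fun w ↦ Real.iSup_le (fun hw ↦ ?_) hnonneg) hnonneg)
    (le_ciSup_ciSup_eq_left (f := fun w _ ↦ dist x y / (dist w x + dist w y)))
  rw [hw]

lemma mem_sBall_compl_singleton_iff {n : ℕ} [Nontrivial (EuclideanSpace ℝ (Fin n))]
    {z x y : EuclideanSpace ℝ (Fin n)} (hx : x ≠ z) {r : ℝ} (hr : r ≤ 1) :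
    y ∈ sBall {z}ᶜ x r ↔ dist x y < r * (dist z x + dist z y) := by
  have hzx : 0 < dist z x := dist_pos.mpr hx.symm
  rw [sBall, Set.mem_sep_iff, sMetric_compl_singleton, div_lt_iff₀ (by positivity), mul_comm]
  refine and_iff_right_of_imp fun h (hyz : y = z) ↦ ?_
  rw [hyz, dist_self, add_zero, dist_comm] at h
  nlinarith

lemma lt_mul_add_of_sq_eq {a r u v B D : ℝ} (ha : 0 < a) (hr : r ∈ Set.Ioc (1 / 2) 1)
    (hu : (1 + r) * u = (1 - r) * a) (hv : 0 < v) (hva : v ≤ (2 * r - 1) * a)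
    (hB : 0 ≤ B) (hB2 : B ^ 2 = u ^ 2 + v ^ 2) (hD2 : D ^ 2 = (a - u) ^ 2 + v ^ 2) :
    D < r * (a + B) := by
  obtain ⟨hr0, hr1⟩ := hr
  have hu0 : 0 ≤ u := by nlinarith
  have huB : u < B := by nlinarith
  have hBuv : B ≤ u + v := by nlinarith
  -- At `v = 0` this reads `(1 - r)² < r²`: this is where `r > 1/2` enters.
  have hgap : (1 - r ^ 2) * (B + u) < 2 * r ^ 2 * a := by nlinarith
  have hsq : D ^ 2 < (r * (a + B)) ^ 2 := by
    have : (r * (a + B)) ^ 2 - D ^ 2 = (B - u) * (2 * r ^ 2 * a - (1 - r ^ 2) * (B + u)) := by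
      linear_combination (-1 : ℝ) * hD2 + hB2 + (r * (a + u) + (a - u)) * hu
    nlinarith
  exact lt_of_pow_lt_pow_left₀ 2 (by positivity) hsq

section Geometry

variable {E : Type*} [NormedAddCommGroup E] [InnerProductSpace ℝ E] {x z d : E} {r : ℝ}

lemma exists_norm_eq_inner_eq_zero [FiniteDimensional ℝ E] (hE : 2 ≤ finrank ℝ E) (w : E)
    {ρ : ℝ} (hρ : 0 ≤ ρ) : ∃ d : E, ‖d‖ = ρ ∧ ⟪w, d⟫ = 0 := by
  have hspan : finrank ℝ (ℝ ∙ w) ≤ 1 := by simpa using finrank_span_le_card ({w} : Set E)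
  have hsum := (ℝ ∙ w).finrank_add_finrank_orthogonal
  obtain ⟨e, he, he0⟩ := Submodule.exists_mem_ne_zero_of_ne_bot (p := (ℝ ∙ w)ᗮ) fun h ↦ by
    rw [h, finrank_bot] at hsum; omega
  refine ⟨(ρ / ‖e‖) • e, ?_, ?_⟩
  · rw [norm_smul, Real.norm_eq_abs, abs_of_nonneg (by positivity),
      div_mul_cancel₀ _ (norm_ne_zero_iff.mpr he0)]
  · rw [real_inner_smul_right, Submodule.mem_orthogonal_singleton_iff_inner_right.mp he, mul_zero]

lemma norm_smul_add_sq_of_inner_eq_zero {w : E} (t : ℝ) (hd : ⟪w, d⟫ = 0) :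
    ‖t • w + d‖ ^ 2 = (|t| * ‖w‖) ^ 2 + ‖d‖ ^ 2 := by
  have hperp : ⟪t • w, d⟫ = 0 := by rw [real_inner_smul_left, hd, mul_zero]
  rw [sq, sq, sq, norm_add_sq_eq_norm_sq_add_norm_sq_real hperp, norm_smul, Real.norm_eq_abs]

lemma dist_lineMap_eq_mul (hr0 : 0 ≤ r) (hr1 : r ≤ 1) :
    dist x (lineMap z x ((1 - r) / (1 + r))) =
      r * (dist z x + dist z (lineMap z x ((1 - r) / (1 + r)))) := by
  have hr : 0 < 1 + r := by linarith
  rw [dist_right_lineMap, dist_left_lineMap, Real.norm_eq_abs, Real.norm_eq_abs,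
    abs_of_nonneg (div_nonneg (by linarith) hr.le),
    abs_of_nonneg (by rw [sub_nonneg, div_le_one hr]; linarith)]
  field_simp
  ring

lemma dist_lineMap_add_lt (hr : r ∈ Set.Ioc (1 / 2) 1) (hxz : x ≠ z) (hd : ⟪x - z, d⟫ = 0)
    (hd0 : d ≠ 0) (hdx : ‖d‖ ≤ (2 * r - 1) * dist z x) :
    dist x (lineMap z x ((1 - r) / (1 + r)) + d) <
      r * (dist z x + dist z (lineMap z x ((1 - r) / (1 + r)) + d)) := by
  obtain ⟨hr0, hr1⟩ := id hr
  set c := (1 - r) / (1 + r) with hc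
  have hc0 : 0 ≤ c := div_nonneg (by linarith) (by linarith)
  have hc1 : c ≤ 1 := by rw [hc, div_le_one (by linarith)]; linarith
  have hzx : dist z x = ‖x - z‖ := dist_comm z x ▸ dist_eq_norm x z
  refine lt_mul_add_of_sq_eq (u := c * dist z x) (v := ‖d‖) (dist_pos.mpr hxz.symm) hr
    (by rw [hc]; field_simp) (norm_pos_iff.mpr hd0) hdx dist_nonneg ?_ ?_
  · rw [dist_comm, dist_eq_norm, show lineMap z x c + d - z = c • (x - z) + d by
      rw [lineMap_apply_module']; abel, norm_smul_add_sq_of_inner_eq_zero c hd,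
      abs_of_nonneg hc0, hzx]
  · rw [dist_comm, dist_eq_norm, show lineMap z x c + d - x = (c - 1) • (x - z) + d by
      rw [lineMap_apply_module']; module, norm_smul_add_sq_of_inner_eq_zero _ hd,
      abs_of_nonpos (by linarith), hzx]
    ring

end Geometry

/-- Let n ≥ 2, z ∈ ℝⁿ, G = ℝⁿ \ {z}, x ∈ G, and r ∈ (1/2, 1]. Then the metric ball
B_s(x,r) is not a convex subset of ℝⁿ. -/
theorem sBall_punctured_not_convex (n : ℕ) (hn : 2 ≤ n) (z : EuclideanSpace ℝ (Fin n))
    (x : EuclideanSpace ℝ (Fin n)) (hx : x ≠ z) (r : ℝ) (hr : r ∈ Set.Ioc (1/2 : ℝ) 1) :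
    ¬ Convex ℝ (sBall {z}ᶜ x r) := by
  have : Nontrivial (EuclideanSpace ℝ (Fin n)) := ⟨x, z, hx⟩
  have hρ : 0 < (2 * r - 1) * dist z x := mul_pos (by linarith [hr.1]) (dist_pos.mpr hx.symm)
  obtain ⟨d, hd_norm, hd⟩ := exists_norm_eq_inner_eq_zero
    (finrank_euclideanSpace_fin (𝕜 := ℝ) ▸ hn) (x - z) hρ.le
  have hd0 : d ≠ 0 := norm_pos_iff.mp (hd_norm ▸ hρ)
  set m := lineMap z x ((1 - r) / (1 + r))
  have hm : m ∉ sBall {z}ᶜ x r := fun h ↦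
    ((mem_sBall_compl_singleton_iff hx hr.2).mp h).ne
      (dist_lineMap_eq_mul (by linarith [hr.1]) hr.2)
  have hp : m + d ∈ sBall {z}ᶜ x r := (mem_sBall_compl_singleton_iff hx hr.2).mpr
    (dist_lineMap_add_lt hr hx hd hd0 hd_norm.le)
  have hq : m - d ∈ sBall {z}ᶜ x r := (mem_sBall_compl_singleton_iff hx hr.2).mpr <| by
    rw [sub_eq_add_neg]
    exact dist_lineMap_add_lt hr hx (by rw [inner_neg_right, hd, neg_zero]) (neg_ne_zero.mpr hd0)
      (by rw [norm_neg, hd_norm])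
  exact fun hconv ↦ hm (midpoint_add_sub (R := ℝ) m d ▸ hconv.midpoint_mem hp hq)
end

section
/- Let n ≥ 1 and G = ℍⁿ = {x ∈ ℝⁿ : xₙ > 0} be the upper half-space. For all x, y ∈ G, s_G(x,y) = |x − y| / |x − y'|, where y' = (y₁, …, y_{n−1}, −yₙ) is the reflection of y in ∂ℍⁿ; that is, the supremum sup_{z ∈ ∂ℍⁿ} |x−y|/(|z−x|+|z−y|) equals |x−y|/|x−y'|. -/
open Set Convex

-- `0 ≤ M` is needed because in `ℝ` the inner supremum at `z ∉ S` is `sSup ∅ = 0`.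
theorem Real.biSup_eq_of_isGreatest {α : Type*} {S : Set α} {f : α → ℝ} {M : ℝ}
    (h : IsGreatest (f '' S) M) (hM : 0 ≤ M) : ⨆ z ∈ S, f z = M := by
  obtain ⟨⟨z₀, hz₀, rfl⟩, hle⟩ := h
  have hbdd : BddAbove (range fun z => ⨆ _ : z ∈ S, f z) :=
    ⟨f z₀, forall_mem_range.2 fun z => Real.iSup_le (fun hz => hle (mem_image_of_mem f hz)) hM⟩
  refine le_antisymm
    (Real.iSup_le (fun z => Real.iSup_le (fun hz => hle (mem_image_of_mem f hz)) hM) hM) ?_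
  calc f z₀ = ⨆ _ : z₀ ∈ S, f z₀ := (ciSup_pos (f := fun _ => f z₀) hz₀).symm
    _ ≤ ⨆ z ∈ S, f z := le_ciSup hbdd z₀

theorem biSup_dist_div_dist_add_dist_eq {X : Type*} [MetricSpace X] {S : Set X} {x y y' z₀ : X}
    (hxy' : x ≠ y') (hS : ∀ z ∈ S, dist z y = dist z y') (hz₀ : z₀ ∈ S)
    (hbtw : dist z₀ x + dist z₀ y' = dist x y') :
    ⨆ z ∈ S, dist x y / (dist z x + dist z y) = dist x y / dist x y' := by
  refine Real.biSup_eq_of_isGreatest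
    ⟨⟨z₀, hz₀, by dsimp only; rw [hS z₀ hz₀, hbtw]⟩, ?_⟩ (by positivity)
  rintro _ ⟨z, hz, rfl⟩
  have htri : dist x y' ≤ dist z x + dist z y := by
    rw [hS z hz, dist_comm z x]
    exact dist_triangle x z y'
  exact div_le_div_of_nonneg_left dist_nonneg (dist_pos.2 hxy') htri

namespace EuclideanSpace

variable {ι : Type*} [Fintype ι]

theorem frontier_setOf_zero_lt_apply (i : ι) :
    frontier {w : EuclideanSpace ℝ ι | 0 < w i} = {w | w i = 0} := by
  classical
  have hsurj : Function.Surjective (proj i : EuclideanSpace ℝ ι →L[ℝ] ℝ) :=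
    fun c => ⟨single i c, by simp⟩
  change frontier (proj i ⁻¹' Ioi 0) = proj i ⁻¹' {0}
  rw [ContinuousLinearMap.frontier_preimage _ hsurj, frontier_Ioi]

theorem dist_eq_dist_of_apply_eq_zero {i : ι} {y y' z : EuclideanSpace ℝ ι}
    (hy'₁ : ∀ j, j ≠ i → y' j = y j) (hy'₂ : y' i = -(y i)) (hz : z i = 0) :
    dist z y = dist z y' := by
  rw [dist_eq, dist_eq]
  congr 1
  refine Finset.sum_congr rfl fun j _ => ?_
  by_cases hji : j = i
  · subst hji
    simp [hz, hy'₂, Real.dist_eq]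
  · rw [hy'₁ j hji]

end EuclideanSpace

theorem sMetric_halfSpace_eq_general (n : ℕ) (i : Fin n)
    (x y : EuclideanSpace ℝ (Fin n)) (hx : 0 < x i) (hy : 0 < y i)
    (y' : EuclideanSpace ℝ (Fin n)) (hy'₁ : ∀ j, j ≠ i → y' j = y j)
    (hy'₂ : y' i = -(y i)) :
    sMetric {w : EuclideanSpace ℝ (Fin n) | 0 < w i} x y = dist x y / dist x y' := by
  have hxy' : x ≠ y' := fun h => by linarith [congrArg (· i) h]
  obtain ⟨z₀, hz₀seg, hz₀⟩ : ∃ z₀ ∈ [x -[ℝ] y'], z₀ i = 0 := by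
    have hcont : ContinuousOn (fun w : EuclideanSpace ℝ (Fin n) => w i) [x -[ℝ] y'] :=
      (EuclideanSpace.proj i).continuous.continuousOn
    exact (convex_segment x y').isPreconnected.intermediate_value (right_mem_segment ℝ x y')
      (left_mem_segment ℝ x y') hcont ⟨by linarith, hx.le⟩
  rw [sMetric, EuclideanSpace.frontier_setOf_zero_lt_apply]
  refine biSup_dist_div_dist_add_dist_eq hxy'
    (fun z hz => EuclideanSpace.dist_eq_dist_of_apply_eq_zero hy'₁ hy'₂ hz) hz₀ ?_
  rw [dist_comm z₀ x]
  exact dist_add_dist_of_mem_segment hz₀seg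

/-- Let n ≥ 1 and G = ℍⁿ = {x ∈ ℝⁿ : xₙ > 0} be the upper half-space. For all x, y ∈ G,
s_G(x,y) = |x − y| / |x − y'|, where y' = (y₁, …, y_{n−1}, −yₙ) is the reflection of y
in ∂ℍⁿ. -/
theorem sMetric_halfSpace_eq (n : ℕ) (hn : 1 ≤ n) (i : Fin n) (hi : (i : ℕ) = n - 1)
    (x y : EuclideanSpace ℝ (Fin n)) (hx : 0 < x i) (hy : 0 < y i)
    (y' : EuclideanSpace ℝ (Fin n)) (hy'₁ : ∀ j, j ≠ i → y' j = y j)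
    (hy'₂ : y' i = -(y i)) :
    sMetric {w : EuclideanSpace ℝ (Fin n) | 0 < w i} x y = dist x y / dist x y' :=
  sMetric_halfSpace_eq_general n i x y hx hy y' hy'₁ hy'₂
end

section
/- Let n ≥ 1, G = ℍⁿ = {x ∈ ℝⁿ : xₙ > 0}, x ∈ G, and r ∈ (0, xₙ). Then the open Euclidean ball B(x,r) equals the triangular-ratio metric ball B_s(c, t), where c agrees with x in the first n−1 coordinates and has n-th coordinate √(xₙ² − r²), and t = (xₙ − √(xₙ² − r²))/r. -/
/-!
In the half-space `{w | 0 < w i}` the supremum defining `s(c, y)` is attained where the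
segment from `c` to the reflection `y'` of `y` crosses the boundary, so
`s(c, y) = |c - y| / |c - y'|` and the `s`-ball of radius `t` is the Apollonian ball
`|c - y| < t |c - y'|`. With `X = x i` and `q = c i` we have `r² = X² - q²`, so for
`t = (X - q) / r` one gets `t² = (X - q) / (X + q)` and, as `c` and `x` differ only in the
`i`-th coordinate, `t² |c - y'|² - |c - y|² = 2q / (X + q) · (r² - |x - y|²)`.
-/

open Set

namespace EuclideanSpace

variable {n : ℕ}

def reflectCoord (i : Fin n) (y : EuclideanSpace ℝ (Fin n)) : EuclideanSpace ℝ (Fin n) :=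
  WithLp.toLp 2 (Function.update y i (-y i))

@[simp]
lemma reflectCoord_apply_self (i : Fin n) (y : EuclideanSpace ℝ (Fin n)) :
    reflectCoord i y i = -y i := by
  simp [reflectCoord]

lemma reflectCoord_apply_of_ne {i j : Fin n} (h : j ≠ i) (y : EuclideanSpace ℝ (Fin n)) :
    reflectCoord i y j = y j := by
  simp [reflectCoord, h]

lemma dist_sq_eq_sq_add_sum_erase (i : Fin n) (a b : EuclideanSpace ℝ (Fin n)) :
    dist a b ^ 2 = (a i - b i) ^ 2 + ∑ j ∈ Finset.univ.erase i, (a j - b j) ^ 2 := by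
  rw [EuclideanSpace.dist_eq, Real.sq_sqrt (by positivity),
    ← Finset.add_sum_erase _ _ (Finset.mem_univ i)]
  simp only [Real.dist_eq, sq_abs]

lemma dist_reflectCoord_of_apply_eq_zero {i : Fin n} {z : EuclideanSpace ℝ (Fin n)}
    (hz : z i = 0) (y : EuclideanSpace ℝ (Fin n)) :
    dist z (reflectCoord i y) = dist z y := by
  rw [← sq_eq_sq₀ dist_nonneg dist_nonneg, dist_sq_eq_sq_add_sum_erase i,
    dist_sq_eq_sq_add_sum_erase i, reflectCoord_apply_self, hz,
    Finset.sum_congr rfl fun j hj => by rw [reflectCoord_apply_of_ne (Finset.ne_of_mem_erase hj)]]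
  ring

lemma frontier_setOf_pos_apply (i : Fin n) :
    frontier {w : EuclideanSpace ℝ (Fin n) | 0 < w i} = {w | w i = 0} := by
  have hopen : IsOpen {w : EuclideanSpace ℝ (Fin n) | 0 < w i} :=
    isOpen_lt continuous_const (proj i).continuous
  rw [frontier, hopen.interior_eq, closure_open_halfSpace]
  ext w
  simp only [mem_sdiff, mem_ofPred_eq, not_lt, le_antisymm_iff, and_comm]

lemma exists_mem_segment_apply_eq_zero {i : Fin n} {a b : EuclideanSpace ℝ (Fin n)}
    (ha : 0 ≤ a i) (hb : b i ≤ 0) : ∃ z ∈ segment ℝ a b, z i = 0 :=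
  (convex_segment a b).isPreconnected.intermediate_value (right_mem_segment ℝ a b)
    (left_mem_segment ℝ a b) (proj i).continuous.continuousOn ⟨hb, ha⟩

end EuclideanSpace

lemma Real.biSup_eq_of_forall_le_of_exists_eq {ι : Type*} {s : Set ι} {f : ι → ℝ} {M : ℝ}
    (hM : 0 ≤ M) (hle : ∀ z ∈ s, f z ≤ M) (heq : ∃ z ∈ s, f z = M) : ⨆ z ∈ s, f z = M := by
  obtain ⟨z₀, hz₀, rfl⟩ := heq
  have hbound : ∀ z, ⨆ _ : z ∈ s, f z ≤ f z₀ := fun z => Real.iSup_le (hle z) hM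
  exact le_antisymm (Real.iSup_le hbound hM)
    (le_ciSup_of_le ⟨_, forall_mem_range.2 hbound⟩ z₀ (by rw [ciSup_pos hz₀]))

open EuclideanSpace

section HalfSpace

variable {n : ℕ} {i : Fin n} {c y : EuclideanSpace ℝ (Fin n)}

lemma dist_reflectCoord_pos (hc : 0 < c i) (hy : 0 ≤ y i) : 0 < dist c (reflectCoord i y) :=
  dist_pos.2 fun h => by linarith [congrArg (· i) h, reflectCoord_apply_self i y]

theorem sMetric_setOf_pos_apply (hc : 0 < c i) (hy : 0 ≤ y i) :
    sMetric {w | 0 < w i} c y = dist c y / dist c (reflectCoord i y) := by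
  have hy' : reflectCoord i y i ≤ 0 := by simpa using hy
  have hpos := dist_reflectCoord_pos hc hy
  rw [sMetric, frontier_setOf_pos_apply]
  refine Real.biSup_eq_of_forall_le_of_exists_eq (by positivity) (fun z hz => ?_) ?_
  · gcongr
    rw [← dist_reflectCoord_of_apply_eq_zero hz y, dist_comm z c]
    exact dist_triangle _ _ _
  · obtain ⟨z, hz, hzi⟩ := exists_mem_segment_apply_eq_zero hc.le hy'
    refine ⟨z, hzi, ?_⟩
    rw [← dist_reflectCoord_of_apply_eq_zero (y := y) hzi, dist_comm z c,
      dist_add_dist_of_mem_segment hz]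

theorem sMetric_setOf_pos_apply_lt_iff (hc : 0 < c i) (hy : 0 ≤ y i) {t : ℝ} (ht : 0 ≤ t) :
    sMetric {w | 0 < w i} c y < t ↔ dist c y ^ 2 < t ^ 2 * dist c (reflectCoord i y) ^ 2 := by
  rw [sMetric_setOf_pos_apply hc hy, div_lt_iff₀ (dist_reflectCoord_pos hc hy), ← mul_pow,
    pow_lt_pow_iff_left₀ dist_nonneg (by positivity) two_ne_zero]

end HalfSpace

lemma sq_add_lt_sq_mul_sq_add_iff {X q r b S : ℝ} (hq : 0 < q) (hqX : q < X)
    (hr : r ^ 2 = X ^ 2 - q ^ 2) :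
    (q - b) ^ 2 + S < ((X - q) / r) ^ 2 * ((q + b) ^ 2 + S) ↔ (X - b) ^ 2 + S < r ^ 2 := by
  have hXq : 0 < X + q := by linarith
  have ht : ((X - q) / r) ^ 2 = (X - q) / (X + q) := by
    rw [div_pow, hr, div_eq_div_iff (by nlinarith) hXq.ne']
    ring
  have key : ((X - q) / r) ^ 2 * ((q + b) ^ 2 + S) - ((q - b) ^ 2 + S)
      = 2 * q / (X + q) * (r ^ 2 - ((X - b) ^ 2 + S)) := by
    rw [ht, hr]
    field_simp
    ring
  rw [← sub_pos, key, mul_pos_iff_of_pos_left (by positivity), sub_pos]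

theorem euclideanBall_eq_sBall_halfSpace_general (n : ℕ) (i : Fin n)
    (x : EuclideanSpace ℝ (Fin n))
    (r : ℝ) (hr : r ∈ Set.Ioo 0 (x i))
    (c : EuclideanSpace ℝ (Fin n)) (hc₁ : ∀ j, j ≠ i → c j = x j)
    (hc₂ : c i = Real.sqrt ((x i)^2 - r^2)) :
    Metric.ball x r =
      sBall {w : EuclideanSpace ℝ (Fin n) | 0 < w i} c
        ((x i - Real.sqrt ((x i)^2 - r^2)) / r) := by
  obtain ⟨hr0, hrx⟩ := hr
  have hr2 : r ^ 2 = x i ^ 2 - c i ^ 2 := by rw [hc₂, Real.sq_sqrt (by nlinarith)]; ring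
  have hc : 0 < c i := hc₂ ▸ Real.sqrt_pos.2 (by nlinarith)
  have hcx : c i < x i := by nlinarith
  rw [← hc₂]
  ext y
  set S := ∑ j ∈ Finset.univ.erase i, (x j - y j) ^ 2
  have hS : ∀ z : EuclideanSpace ℝ (Fin n), (∀ j ≠ i, z j = y j) →
      ∑ j ∈ Finset.univ.erase i, (c j - z j) ^ 2 = S := fun z hz =>
    Finset.sum_congr rfl fun j hj => by
      rw [hc₁ j (Finset.ne_of_mem_erase hj), hz j (Finset.ne_of_mem_erase hj)]
  have hcy : dist c y ^ 2 = (c i - y i) ^ 2 + S := by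
    rw [dist_sq_eq_sq_add_sum_erase i, hS y fun _ _ => rfl]
  have hcy' : dist c (reflectCoord i y) ^ 2 = (c i + y i) ^ 2 + S := by
    rw [dist_sq_eq_sq_add_sum_erase i, hS _ fun j hj => reflectCoord_apply_of_ne hj y,
      reflectCoord_apply_self, sub_neg_eq_add]
  have hball : y ∈ Metric.ball x r ↔ (x i - y i) ^ 2 + S < r ^ 2 := by
    rw [Metric.mem_ball', ← pow_lt_pow_iff_left₀ dist_nonneg hr0.le two_ne_zero,
      dist_sq_eq_sq_add_sum_erase i]
  have hsBall : y ∈ sBall {w | 0 < w i} c ((x i - c i) / r) ↔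
      0 < y i ∧ (x i - y i) ^ 2 + S < r ^ 2 := by
    refine and_congr_right fun hy => ?_
    rw [sMetric_setOf_pos_apply_lt_iff hc hy.le (by positivity), hcy, hcy',
      sq_add_lt_sq_mul_sq_add_iff hc hcx hr2]
  have hpos : (x i - y i) ^ 2 + S < r ^ 2 → 0 < y i := fun h => by
    nlinarith [Finset.sum_nonneg fun j (_ : j ∈ Finset.univ.erase i) => sq_nonneg (x j - y j)]
  rw [hball, hsBall, and_iff_right_of_imp hpos]

/-- Let n ≥ 1, G = ℍⁿ, x ∈ G, and r ∈ (0, xₙ). Then the open Euclidean ball B(x,r)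
equals the triangular-ratio metric ball B_s(c, t), where c agrees with x in the first
n−1 coordinates and has n-th coordinate √(xₙ² − r²), and t = (xₙ − √(xₙ² − r²))/r. -/
theorem euclideanBall_eq_sBall_halfSpace (n : ℕ) (hn : 1 ≤ n) (i : Fin n)
    (hi : (i : ℕ) = n - 1) (x : EuclideanSpace ℝ (Fin n)) (hx : 0 < x i)
    (r : ℝ) (hr : r ∈ Set.Ioo 0 (x i))
    (c : EuclideanSpace ℝ (Fin n)) (hc₁ : ∀ j, j ≠ i → c j = x j)
    (hc₂ : c i = Real.sqrt ((x i)^2 - r^2)) :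
    Metric.ball x r =
      sBall {w : EuclideanSpace ℝ (Fin n) | 0 < w i} c
        ((x i - Real.sqrt ((x i)^2 - r^2)) / r) :=
  euclideanBall_eq_sBall_halfSpace_general n i x r hr c hc₁ hc₂
end

section
/- Let n ≥ 2, G = ℍⁿ \ {eₙ}, where ℍⁿ = {x ∈ ℝⁿ : xₙ > 0} and eₙ is the n-th standard basis vector, let x ∈ G and r ∈ (0, 1/2]. Then the metric ball B_s(x,r) = {y ∈ G : s_G(x,y) < r} is a convex subset of ℝⁿ. -/
/-!
The boundary of `G` is the hyperplane `xₙ = 0` together with `eₙ`. Over the hyperplane the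
supremum defining `s_G(x, y)` equals `|x - y| / |x̄ - y|`, where `x̄` is the mirror image of `x`;
it is attained where the segment `[x̄, y]` crosses the hyperplane. Hence `B_s(x, r)` is the
intersection of the Apollonius ball `|x - y| < r |x̄ - y|`, convex for `r ≤ 1`, and the domain
`|x - y| < r (|eₙ - x| + |eₙ - y|)` bounded by a Cartesian oval. The latter lies in a half-space
on which `|y - eₙ| ≥ r d / (1 + r)`, `d = |eₙ - x|`, and there its squared defining function is
convex in `y`: the profile `a ↦ a² - r² (d + a)²` increases beyond its vertex `r² d / (1 - r²)`,
which is at most `r d / (1 + r)` exactly when `r ≤ 1/2`.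
-/

open scoped RealInnerProductSpace
open Set Topology Submodule

section Convexity

variable {E : Type*} [NormedAddCommGroup E] [InnerProductSpace ℝ E]

lemma dist_sq_eq_sub_two_inner_add (x p y : E) :
    dist x y ^ 2 = dist p x ^ 2 - 2 * ⟪x - p, y - p⟫ + dist p y ^ 2 := by
  rw [dist_eq_norm, dist_comm p, dist_eq_norm, dist_comm p, dist_eq_norm,
    ← norm_sub_sq_real, sub_sub_sub_cancel_right]

lemma dist_smul_add_smul_sq (a u v : E) {t s : ℝ} (hts : t + s = 1) :
    dist a (t • u + s • v) ^ 2 = t * dist a u ^ 2 + s * dist a v ^ 2 - t * s * dist u v ^ 2 := by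
  obtain rfl : s = 1 - t := by linarith
  have hdiff : a - (t • u + (1 - t) • v) = t • (a - u) + (1 - t) • (a - v) := by
    simp only [smul_sub, sub_smul, one_smul]; abel
  have huv : u - v = (a - v) - (a - u) := by abel
  rw [dist_eq_norm, dist_eq_norm, dist_eq_norm, dist_eq_norm, hdiff, huv, norm_add_sq_real,
    norm_sub_sq_real (a - v), norm_smul, norm_smul, real_inner_smul_left, real_inner_smul_right,
    mul_pow, mul_pow, Real.norm_eq_abs, Real.norm_eq_abs, sq_abs, sq_abs, real_inner_comm (a - u)]
  ring

lemma convexOn_dist_sq_sub_mul_dist_sq (x c : E) {r : ℝ} (hr : |r| ≤ 1) :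
    ConvexOn ℝ univ fun y ↦ dist x y ^ 2 - (r * dist c y) ^ 2 := by
  refine ⟨convex_univ, fun y₁ _ y₂ _ t s ht hs hts ↦ ?_⟩
  have hr2 : r ^ 2 ≤ 1 := (sq_le_one_iff_abs_le_one r).2 hr
  simp only [smul_eq_mul, mul_pow, dist_smul_add_smul_sq _ _ _ hts]
  nlinarith [mul_nonneg (mul_nonneg ht hs) (mul_nonneg (sub_nonneg.2 hr2) (sq_nonneg (dist y₁ y₂)))]

theorem convex_setOf_dist_lt_mul_dist (x c : E) {r : ℝ} (hr₀ : 0 ≤ r) (hr₁ : r ≤ 1) :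
    Convex ℝ {y | dist x y < r * dist c y} := by
  have hr : |r| ≤ 1 := abs_le.2 ⟨by linarith, hr₁⟩
  convert (convexOn_dist_sq_sub_mul_dist_sq x c hr).convex_lt 0 using 1
  ext y
  simp only [mem_ofPred_eq, mem_univ, true_and, sub_neg]
  exact (sq_lt_sq₀ dist_nonneg (by positivity)).symm

lemma inner_sub_smul_add_smul_sub (w p u v : E) {t s : ℝ} (hts : t + s = 1) :
    ⟪w, t • u + s • v - p⟫ = t * ⟪w, u - p⟫ + s * ⟪w, v - p⟫ := by
  obtain rfl : s = 1 - t := by linarith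
  simp only [inner_sub_right, inner_add_right, real_inner_smul_right]
  ring

lemma sq_sub_sq_mul_add_le_of_le_combo {r d a a₁ a₂ t s : ℝ} (hr₀ : 0 ≤ r) (hr : r ≤ 1 / 2)
    (hd : 0 ≤ d) (ht : 0 ≤ t) (hs : 0 ≤ s) (hts : t + s = 1) (hlow : r * d ≤ (1 + r) * a)
    (ha : a ≤ t * a₁ + s * a₂) :
    a ^ 2 - (r * (d + a)) ^ 2
      ≤ t * (a₁ ^ 2 - (r * (d + a₁)) ^ 2) + s * (a₂ ^ 2 - (r * (d + a₂)) ^ 2) := by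
  obtain rfl : s = 1 - t := by linarith
  set b := t * a₁ + (1 - t) * a₂
  have hvertex : 2 * r ^ 2 * d ≤ (1 - r ^ 2) * (b + a) := by
    nlinarith [mul_nonneg (mul_nonneg hr₀ hd) (by linarith : (0 : ℝ) ≤ 1 - 2 * r),
      mul_nonneg (by linarith : (0 : ℝ) ≤ 1 - r) (sub_nonneg.2 hlow),
      mul_nonneg (by nlinarith : (0 : ℝ) ≤ 1 - r ^ 2) (sub_nonneg.2 ha)]
  have hmono : a ^ 2 - (r * (d + a)) ^ 2 ≤ b ^ 2 - (r * (d + b)) ^ 2 := by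
    nlinarith [mul_nonneg (sub_nonneg.2 ha) (sub_nonneg.2 hvertex)]
  have hconv : b ^ 2 - (r * (d + b)) ^ 2
      ≤ t * (a₁ ^ 2 - (r * (d + a₁)) ^ 2) + (1 - t) * (a₂ ^ 2 - (r * (d + a₂)) ^ 2) := by
    nlinarith [mul_nonneg (mul_nonneg ht hs) (mul_nonneg (by nlinarith : (0 : ℝ) ≤ 1 - r ^ 2)
      (sq_nonneg (a₁ - a₂)))]
  exact hmono.trans hconv

lemma mul_dist_sq_lt_inner_of_dist_lt {p x y : E} {r : ℝ} (hr₀ : 0 ≤ r) (hr : r ≤ 1 / 2)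
    (h : dist x y < r * (dist p x + dist p y)) :
    r * dist p x ^ 2 < (1 + r) * ⟪x - p, y - p⟫ := by
  have hsq := (sq_lt_sq₀ dist_nonneg (by positivity)).2 h
  rw [dist_sq_eq_sub_two_inner_add x p y] at hsq
  have hd := dist_nonneg (x := p) (y := x)
  have key : (1 - r) * (r * dist p x ^ 2) < (1 - r) * ((1 + r) * ⟪x - p, y - p⟫) := by
    nlinarith [mul_lt_mul_of_pos_left hsq (by nlinarith : (0 : ℝ) < 1 - r ^ 2),
      sq_nonneg ((1 - r ^ 2) * dist p y - r ^ 2 * dist p x),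
      mul_nonneg (by linarith : (0 : ℝ) ≤ 1 - 2 * r) (sq_nonneg (dist p x))]
  exact lt_of_mul_lt_mul_left key (by linarith)

lemma convex_setOf_lt_inner_sub (p w : E) (c : ℝ) : Convex ℝ {y | c < ⟪w, y - p⟫} := by
  have h := convex_halfSpace_gt (innerₛₗ ℝ w).isLinear (c + ⟪w, p⟫)
  simpa only [innerₛₗ_apply_apply, ← lt_sub_iff_add_lt, ← inner_sub_right] using h

lemma convexOn_dist_sq_sub_mul_add_dist_sq (p x : E) {r : ℝ} (hr₀ : 0 ≤ r) (hr : r ≤ 1 / 2) :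
    ConvexOn ℝ {y | r * dist p x ^ 2 < (1 + r) * ⟪x - p, y - p⟫}
      fun y ↦ dist x y ^ 2 - (r * (dist p x + dist p y)) ^ 2 := by
  have hH : Convex ℝ {y | r * dist p x ^ 2 < (1 + r) * ⟪x - p, y - p⟫} := by
    simpa only [real_inner_smul_left] using
      convex_setOf_lt_inner_sub p ((1 + r) • (x - p)) (r * dist p x ^ 2)
  refine ⟨hH, fun y₁ h₁ y₂ h₂ t s ht hs hts ↦ ?_⟩
  set y := t • y₁ + s • y₂
  have hy : r * dist p x ^ 2 < (1 + r) * ⟪x - p, y - p⟫ := hH h₁ h₂ ht hs hts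
  have hcs : ⟪x - p, y - p⟫ ≤ dist p x * dist p y := by
    simpa only [dist_comm p, dist_eq_norm] using real_inner_le_norm (x - p) (y - p)
  have htri : dist p y ≤ t * dist p y₁ + s * dist p y₂ := by
    simpa only [dist_comm p, smul_eq_mul] using (convexOn_dist p convex_univ).2
      (mem_univ y₁) (mem_univ y₂) ht hs hts
  have hd := dist_nonneg (x := p) (y := x)
  have hlow : r * dist p x ≤ (1 + r) * dist p y := by nlinarith
  have hprofile := sq_sub_sq_mul_add_le_of_le_combo hr₀ hr hd ht hs hts hlow htri
  simp only [smul_eq_mul]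
  rw [dist_sq_eq_sub_two_inner_add x p y, dist_sq_eq_sub_two_inner_add x p y₁,
    dist_sq_eq_sub_two_inner_add x p y₂, inner_sub_smul_add_smul_sub _ _ _ _ hts]
  nlinarith

theorem convex_setOf_dist_lt_mul_add_dist (p x : E) {r : ℝ} (hr₀ : 0 ≤ r) (hr : r ≤ 1 / 2) :
    Convex ℝ {y | dist x y < r * (dist p x + dist p y)} := by
  convert (convexOn_dist_sq_sub_mul_add_dist_sq p x hr₀ hr).convex_lt 0 using 1
  ext y
  simp only [mem_ofPred_eq, sub_neg]
  rw [sq_lt_sq₀ dist_nonneg (by positivity)]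
  exact ⟨fun h ↦ ⟨mul_dist_sq_lt_inner_of_dist_lt hr₀ hr h, h⟩, And.right⟩

end Convexity

section Reflection

variable {E : Type*} [NormedAddCommGroup E] [InnerProductSpace ℝ E] {u : E}

lemma inner_reflection_orthogonal_singleton (u x : E) :
    ⟪u, (ℝ ∙ u)ᗮ.reflection x⟫ = -⟪u, x⟫ := by
  rw [← (ℝ ∙ u)ᗮ.reflection.inner_map_map, reflection_orthogonalComplement_singleton_eq_neg,
    reflection_reflection, inner_neg_left]

lemma dist_reflection_right_of_inner_eq_zero {z : E} (hz : ⟪u, z⟫ = 0) (x : E) :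
    dist z ((ℝ ∙ u)ᗮ.reflection x) = dist z x := by
  have hfix : (ℝ ∙ u)ᗮ.reflection z = z :=
    reflection_mem_subspace_eq_self (Submodule.mem_orthogonal_singleton_iff_inner_right.2 hz)
  calc dist z ((ℝ ∙ u)ᗮ.reflection x)
      = dist ((ℝ ∙ u)ᗮ.reflection z) ((ℝ ∙ u)ᗮ.reflection x) := by rw [hfix]
    _ = dist z x := LinearIsometryEquiv.dist_map _ _ _

lemma exists_inner_eq_zero_mem_segment {a b : E} (ha : ⟪u, a⟫ ≤ 0) (hb : 0 ≤ ⟪u, b⟫) :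
    ∃ z ∈ segment ℝ a b, ⟪u, z⟫ = 0 :=
  (convex_segment a b).isPreconnected.intermediate_value (left_mem_segment ℝ a b)
    (right_mem_segment ℝ a b) (continuous_const.inner continuous_id).continuousOn ⟨ha, hb⟩

lemma dist_reflection_le_dist_add_dist {z : E} (hz : ⟪u, z⟫ = 0) (x y : E) :
    dist ((ℝ ∙ u)ᗮ.reflection x) y ≤ dist z x + dist z y := by
  rw [← dist_reflection_right_of_inner_eq_zero hz x, dist_comm z]
  exact dist_triangle _ _ _

lemma exists_dist_add_dist_eq_dist_reflection {x y : E} (hx : 0 ≤ ⟪u, x⟫) (hy : 0 ≤ ⟪u, y⟫) :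
    ∃ z, ⟪u, z⟫ = 0 ∧ dist z x + dist z y = dist ((ℝ ∙ u)ᗮ.reflection x) y := by
  obtain ⟨z, hzs, hz⟩ := exists_inner_eq_zero_mem_segment (a := (ℝ ∙ u)ᗮ.reflection x)
    (by rw [inner_reflection_orthogonal_singleton]; linarith) hy
  refine ⟨z, hz, ?_⟩
  rw [← dist_reflection_right_of_inner_eq_zero hz x, dist_comm z,
    dist_add_dist_of_mem_segment hzs]

lemma dist_reflection_le_dist_of_inner_nonpos {x y : E} (hx : 0 ≤ ⟪u, x⟫)
    (hy : ⟪u, y⟫ ≤ 0) : dist ((ℝ ∙ u)ᗮ.reflection x) y ≤ dist x y := by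
  obtain ⟨z, hzs, hz⟩ := exists_inner_eq_zero_mem_segment hy hx
  calc dist ((ℝ ∙ u)ᗮ.reflection x) y ≤ dist z x + dist z y :=
        dist_reflection_le_dist_add_dist hz x y
    _ = dist x y := by
        rw [dist_comm z y, add_comm, dist_add_dist_of_mem_segment hzs, dist_comm]

end Reflection

lemma IsOpen.frontier_sdiff_singleton {X : Type*} [TopologicalSpace X] [T1Space X] {U : Set X}
    {p : X} [(𝓝[≠] p).NeBot] (hU : IsOpen U) (hp : p ∈ U) :
    frontier (U \ {p}) = frontier U ∪ {p} := by
  have hcl : closure (U \ {p}) = closure U := by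
    refine subset_antisymm (closure_mono sdiff_subset) (closure_minimal ?_ isClosed_closure)
    simpa only [sdiff_eq] using (dense_compl_singleton p).open_subset_closure_inter hU
  rw [frontier, frontier, hcl, (hU.sdiff isClosed_singleton).interior_eq, hU.interior_eq,
    sdiff_sdiff_right, inter_singleton_of_mem (subset_closure hp)]

lemma frontier_setOf_inner_pos {E : Type*} [NormedAddCommGroup E] [InnerProductSpace ℝ E]
    [CompleteSpace E] {u : E} (hu : u ≠ 0) :
    frontier {w | 0 < ⟪u, w⟫} = {w | ⟪u, w⟫ = 0} := by
  have hsurj : Function.Surjective (innerSL ℝ u) := fun c ↦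
    ⟨(c / ‖u‖ ^ 2) • u, by rw [innerSL_apply_apply, real_inner_smul_right,
      real_inner_self_eq_norm_sq, div_mul_cancel₀ _ (by simpa using hu)]⟩
  exact ((innerSL ℝ u).frontier_preimage hsurj (Ioi 0)).trans (by rw [frontier_Ioi]; rfl)

section TriangularRatio

variable {n : ℕ} {G : Set (EuclideanSpace ℝ (Fin n))} {x y : EuclideanSpace ℝ (Fin n)}

lemma div_le_sMetric {z : EuclideanSpace ℝ (Fin n)} (hz : z ∈ frontier G) :
    dist x y / (dist z x + dist z y) ≤ sMetric G x y := by
  have hle (w : EuclideanSpace ℝ (Fin n)) : dist x y / (dist w x + dist w y) ≤ 1 :=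
    div_le_one_of_le₀ (by simpa only [dist_comm w] using dist_triangle x w y) (by positivity)
  refine le_ciSup_of_le ⟨1, ?_⟩ z ?_
  · rintro _ ⟨w, rfl⟩
    exact Real.iSup_le (fun _ ↦ hle w) zero_le_one
  · rw [ciSup_pos hz]

lemma sMetric_le {m : ℝ} (hm : 0 ≤ m)
    (h : ∀ z ∈ frontier G, dist x y / (dist z x + dist z y) ≤ m) : sMetric G x y ≤ m :=
  Real.iSup_le (fun z ↦ Real.iSup_le (h z) hm) hm

variable {u p : EuclideanSpace ℝ (Fin n)} {r : ℝ}

lemma sMetric_lt_iff_of_frontier_eq (hG : frontier G = {z | ⟪u, z⟫ = 0} ∪ {p})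
    (hx : 0 < ⟪u, x⟫) (hy : 0 < ⟪u, y⟫) (hxp : x ≠ p) :
    sMetric G x y < r ↔
      dist x y < r * dist ((ℝ ∙ u)ᗮ.reflection x) y ∧ dist x y < r * (dist p x + dist p y) := by
  have hσ : 0 < dist ((ℝ ∙ u)ᗮ.reflection x) y := by
    refine dist_pos.2 fun h ↦ ?_
    have := inner_reflection_orthogonal_singleton u x
    rw [h] at this
    linarith
  have hp : 0 < dist p x + dist p y := by
    have := dist_pos.2 (Ne.symm hxp)
    positivity
  obtain ⟨z₀, hz₀, hz₀_eq⟩ := exists_dist_add_dist_eq_dist_reflection hx.le hy.le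
  constructor
  · intro h
    have h₁ := (div_le_sMetric (by rw [hG]; exact Or.inl hz₀)).trans_lt h
    have h₂ := (div_le_sMetric (z := p) (by rw [hG]; exact Or.inr rfl)).trans_lt h
    rw [hz₀_eq, div_lt_iff₀ hσ] at h₁
    rw [div_lt_iff₀ hp] at h₂
    exact ⟨h₁, h₂⟩
  · rintro ⟨h₁, h₂⟩
    have hmax : max (dist x y / dist ((ℝ ∙ u)ᗮ.reflection x) y)
        (dist x y / (dist p x + dist p y)) < r :=
      max_lt ((div_lt_iff₀ hσ).2 (by linarith)) ((div_lt_iff₀ hp).2 (by linarith))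
    refine (sMetric_le (le_max_of_le_left (by positivity)) fun z hz ↦ ?_).trans_lt hmax
    rw [hG] at hz
    rcases hz with hz | rfl
    · exact le_max_of_le_left (div_le_div_of_nonneg_left dist_nonneg hσ
        (dist_reflection_le_dist_add_dist hz x y))
    · exact le_max_right _ _

lemma sBall_halfSpace_diff_singleton (hu : u ≠ 0) (hp : 0 < ⟪u, p⟫)
    (hx : x ∈ {w | 0 < ⟪u, w⟫} \ {p}) (hr : r ≤ 1) :
    sBall ({w | 0 < ⟪u, w⟫} \ {p}) x r =
      {y | dist x y < r * dist ((ℝ ∙ u)ᗮ.reflection x) y} ∩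
        {y | dist x y < r * (dist p x + dist p y)} := by
  have : Nontrivial (EuclideanSpace ℝ (Fin n)) := ⟨⟨u, 0, hu⟩⟩
  have hG : frontier ({w | 0 < ⟪u, w⟫} \ {p}) = {z | ⟪u, z⟫ = 0} ∪ {p} := by
    have hopen : IsOpen {w : EuclideanSpace ℝ (Fin n) | 0 < ⟪u, w⟫} :=
      isOpen_lt continuous_const (continuous_const.inner continuous_id)
    rw [hopen.frontier_sdiff_singleton hp, frontier_setOf_inner_pos hu]
  obtain ⟨hx, hxp⟩ := hx
  ext y
  simp only [sBall, mem_inter_iff, mem_ofPred_eq]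
  refine ⟨fun ⟨⟨hy, _⟩, h⟩ ↦ (sMetric_lt_iff_of_frontier_eq hG hx hy hxp).1 h, fun ⟨h₁, h₂⟩ ↦ ?_⟩
  have hy : 0 < ⟪u, y⟫ := by
    by_contra! hy
    have := dist_reflection_le_dist_of_inner_nonpos hx.le hy
    nlinarith [dist_nonneg (x := (ℝ ∙ u)ᗮ.reflection x) (y := y)]
  have hyp : y ≠ p := by
    rintro rfl
    rw [dist_self, add_zero, dist_comm] at h₂
    nlinarith [mul_nonneg (sub_nonneg.2 hr) (dist_nonneg (x := y) (y := x))]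
  exact ⟨⟨hy, hyp⟩, (sMetric_lt_iff_of_frontier_eq hG hx hy hxp).2 ⟨h₁, h₂⟩⟩

end TriangularRatio

theorem sBall_punctured_halfSpace_convex_general (n : ℕ) (i : Fin n)
    (x : EuclideanSpace ℝ (Fin n))
    (hx : x ∈ {w : EuclideanSpace ℝ (Fin n) | 0 < w i} \ ({EuclideanSpace.single i (1:ℝ)} : Set (EuclideanSpace ℝ (Fin n))))
    (r : ℝ) (hr : r ∈ Set.Ioc (0:ℝ) (1/2)) :
    Convex ℝ (sBall ({w : EuclideanSpace ℝ (Fin n) | 0 < w i} \ ({EuclideanSpace.single i (1:ℝ)} : Set (EuclideanSpace ℝ (Fin n)))) x r) := by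
  obtain ⟨hr₀, hr₂⟩ := hr
  set u : EuclideanSpace ℝ (Fin n) := EuclideanSpace.single i 1
  have hhalf : {w : EuclideanSpace ℝ (Fin n) | 0 < w i} = {w | 0 < ⟪u, w⟫} := by
    ext w
    simp [u, EuclideanSpace.inner_single_left]
  have hu : u ≠ 0 := by simp [u]
  rw [hhalf] at hx ⊢
  rw [sBall_halfSpace_diff_singleton hu (real_inner_self_pos.2 hu) hx (by linarith)]
  exact (convex_setOf_dist_lt_mul_dist _ _ hr₀.le (by linarith)).inter
    (convex_setOf_dist_lt_mul_add_dist _ _ hr₀.le hr₂)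

/-- Let n ≥ 2, G = ℍⁿ \ {eₙ}, x ∈ G and r ∈ (0, 1/2]. Then the metric ball B_s(x,r)
is a convex subset of ℝⁿ. -/
theorem sBall_punctured_halfSpace_convex (n : ℕ) (hn : 2 ≤ n) (i : Fin n)
    (hi : (i : ℕ) = n - 1) (x : EuclideanSpace ℝ (Fin n))
    (hx : x ∈ {w : EuclideanSpace ℝ (Fin n) | 0 < w i} \ ({EuclideanSpace.single i (1:ℝ)} : Set (EuclideanSpace ℝ (Fin n))))
    (r : ℝ) (hr : r ∈ Set.Ioc (0:ℝ) (1/2)) :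
    Convex ℝ (sBall ({w : EuclideanSpace ℝ (Fin n) | 0 < w i} \ ({EuclideanSpace.single i (1:ℝ)} : Set (EuclideanSpace ℝ (Fin n)))) x r) :=
  sBall_punctured_halfSpace_convex_general n i x hx r hr
end

section
/- Let G ⊊ ℝⁿ be a domain (nonempty, open, connected, proper subset). Then for every x ∈ G and every r ∈ (0,1), the open Euclidean ball B(x, (2r/(1+r))·d_G(x)) is contained in the triangular-ratio metric ball B_s(x,r), and B_s(x,r) is contained in the open Euclidean ball B(x, (2r/(1−r))·d_G(x)). -/
open Metric

theorem IsOpen.ball_infDist_frontier_subset {E : Type*} [SeminormedAddCommGroup E]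
    [NormedSpace ℝ E] {G : Set E} (hG : IsOpen G) {x : E} (hx : x ∈ G) :
    ball x (infDist x (frontier G)) ⊆ G := by
  rcases (ball x (infDist x (frontier G))).eq_empty_or_nonempty with hempty | hne
  · simp [hempty]
  refine (convex_ball x _).isPreconnected.subset_of_closure_inter_subset hG
    ⟨x, mem_ball_self (nonempty_ball.mp hne), hx⟩ ?_
  rintro y ⟨hy_closure, hy_ball⟩
  by_contra hyG
  exact disjoint_ball_infDist.notMem_of_mem_left hy_ball
    ⟨hy_closure, by rwa [hG.interior_eq]⟩

theorem div_dist_add_dist_le_one {α : Type*} [PseudoMetricSpace α] (x y z : α) :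
    dist x y / (dist z x + dist z y) ≤ 1 :=
  div_le_one_of_le₀ (dist_comm x z ▸ dist_triangle x z y) (by positivity)

section TriangularRatio

variable {n : ℕ} {G : Set (EuclideanSpace ℝ (Fin n))} {x y z : EuclideanSpace ℝ (Fin n)}

theorem div_dist_add_dist_le_sMetric (hz : z ∈ frontier G) :
    dist x y / (dist z x + dist z y) ≤ sMetric G x y := by
  have hbdd : BddAbove (Set.range fun w =>
      ⨆ _ : w ∈ frontier G, dist x y / (dist w x + dist w y)) :=
    ⟨1, Set.forall_mem_range.mpr fun w =>
      Real.iSup_le (fun _ => div_dist_add_dist_le_one x y w) zero_le_one⟩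
  exact le_ciSup_of_le hbdd z (by rw [ciSup_pos hz])

theorem sMetric_lt_of_dist_lt {r : ℝ} (hr : 0 < r)
    (h : dist x y < 2 * r / (1 + r) * infDist x (frontier G)) : sMetric G x y < r := by
  set d := infDist x (frontier G)
  set t := dist x y
  have ht : t < r * (2 * d - t) := by
    rw [div_mul_eq_mul_div, lt_div_iff₀ (by linarith)] at h
    linarith
  have hden : 0 < 2 * d - t := pos_of_mul_pos_right (dist_nonneg.trans_lt ht) hr.le
  have hbound : 0 ≤ t / (2 * d - t) := div_nonneg dist_nonneg hden.le
  refine lt_of_le_of_lt ?_ ((div_lt_iff₀ hden).mpr ht)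
  refine Real.iSup_le (fun w => Real.iSup_le (fun hw => ?_) hbound) hbound
  have hwx : d ≤ dist w x := dist_comm x w ▸ infDist_le_dist_of_mem hw
  have hwy : dist w x ≤ dist w y + t := dist_triangle_right w x y
  exact div_le_div_of_nonneg_left dist_nonneg hden (by linarith)

theorem dist_lt_of_sMetric_lt {r : ℝ} (hd : 0 < infDist x (frontier G)) (hr : r < 1)
    (hs : sMetric G x y < r) : dist x y < 2 * r / (1 - r) * infDist x (frontier G) := by
  have hfr : (frontier G).Nonempty :=
    Set.nonempty_iff_ne_empty.mpr fun h => hd.ne' (by rw [h, infDist_empty])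
  set d := infDist x (frontier G)
  set t := dist x y
  obtain ⟨z, hz, hzd⟩ := isClosed_frontier.exists_infDist_eq_dist hfr x
  have hzx : dist z x = d := by rw [dist_comm, ← hzd]
  have hzy : dist z y ≤ d + t := hzx ▸ dist_triangle z x y
  have hden : 0 < dist z x + dist z y := by rw [hzx]; positivity
  have ht : t < r * (dist z x + dist z y) :=
    (div_lt_iff₀ hden).mp ((div_dist_add_dist_le_sMetric hz).trans_lt hs)
  have hr0 : 0 < r := pos_of_mul_pos_left (dist_nonneg.trans_lt ht) hden.le
  rw [div_mul_eq_mul_div, lt_div_iff₀ (by linarith)]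
  nlinarith

end TriangularRatio

theorem euclideanBall_subset_sBall_subset_euclideanBall_general (n : ℕ)
    (G : Set (EuclideanSpace ℝ (Fin n))) (hGo : IsOpen G)
    (hGp : G ≠ Set.univ) (x : EuclideanSpace ℝ (Fin n)) (hx : x ∈ G)
    (r : ℝ) (hr : r ∈ Set.Ioo (0:ℝ) 1) :
    Metric.ball x (2 * r / (1 + r) * Metric.infDist x (frontier G)) ⊆ sBall G x r ∧
    sBall G x r ⊆ Metric.ball x (2 * r / (1 - r) * Metric.infDist x (frontier G)) := by
  obtain ⟨hr0, hr1⟩ := hr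
  have hfr : (frontier G).Nonempty := nonempty_frontier_iff.mpr ⟨⟨x, hx⟩, hGp⟩
  have hx_frontier : x ∉ frontier G := fun h => h.2 (by rwa [hGo.interior_eq])
  have hd : 0 < infDist x (frontier G) :=
    (isClosed_frontier.notMem_iff_infDist_pos hfr).mp hx_frontier
  have hradius : 2 * r / (1 + r) < 1 := by rw [div_lt_one (by linarith)]; linarith
  constructor
  · intro y hy
    have hy' : dist x y < 2 * r / (1 + r) * infDist x (frontier G) := by
      rwa [dist_comm, ← mem_ball]
    refine ⟨hGo.ball_infDist_frontier_subset hx ?_, sMetric_lt_of_dist_lt hr0 hy'⟩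
    exact ball_subset_ball (mul_le_of_le_one_left hd.le hradius.le) hy
  · rintro y ⟨-, hs⟩
    rw [mem_ball, dist_comm]
    exact dist_lt_of_sMetric_lt hd hr1 hs

/-- Let G ⊊ ℝⁿ be a domain (nonempty, open, connected, proper subset). Then for every
x ∈ G and every r ∈ (0,1), B(x, (2r/(1+r))·d_G(x)) ⊆ B_s(x,r) ⊆ B(x, (2r/(1−r))·d_G(x)),
where B denotes open Euclidean balls and d_G(x) = dist(x, ∂G). -/
theorem euclideanBall_subset_sBall_subset_euclideanBall (n : ℕ)
    (G : Set (EuclideanSpace ℝ (Fin n))) (hGo : IsOpen G) (hGc : IsConnected G)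
    (hGp : G ≠ Set.univ) (x : EuclideanSpace ℝ (Fin n)) (hx : x ∈ G)
    (r : ℝ) (hr : r ∈ Set.Ioo (0:ℝ) 1) :
    Metric.ball x (2 * r / (1 + r) * Metric.infDist x (frontier G)) ⊆ sBall G x r ∧
    sBall G x r ⊆ Metric.ball x (2 * r / (1 - r) * Metric.infDist x (frontier G)) :=
  euclideanBall_subset_sBall_subset_euclideanBall_general n G hGo hGp x hx r hr
end

section
/- Let n ≥ 1, G = ℝⁿ \ {0}, x ∈ G, and r ∈ (0,1). Then B(x, (2r/(1+r))·|x|) ⊆ B_s(x,r) ⊆ B(x, (2r/(1−r))·|x|), where B denotes open Euclidean balls. Moreover both inclusions are sharp: the point y₁ = (1 − 2r/(1+r))·x satisfies |x − y₁| = (2r/(1+r))·|x| and s_G(x, y₁) = r, and the point y₂ = (1 + 2r/(1−r))·x satisfies |x − y₂| = (2r/(1−r))·|x| and s_G(x, y₂) = r. -/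
open Filter Topology

/-!
On `ℝⁿ \ {0}` the only boundary point is the origin, so `s(x, y) = |x - y| / (|x| + |y|)`.
Both inclusions then follow from the triangle inequality `||x| - |y|| ≤ |x - y|`, and the extremal
points lie on the ray through `x`, where `|y| = |x| ∓ |x - y|` turns it into an equality.
-/

theorem Real.biSup_singleton {α : Type*} {a : α} {f : α → ℝ} (hf : 0 ≤ f a) :
    ⨆ z ∈ ({a} : Set α), f z = f a := by
  have hle (z : α) : ⨆ _ : z ∈ ({a} : Set α), f z ≤ f a :=
    Real.iSup_le (fun hz => (congrArg f (Set.mem_singleton_iff.1 hz)).le) hf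
  exact le_antisymm (Real.iSup_le hle hf)
    (le_ciSup_of_le ⟨f a, Set.forall_mem_range.2 hle⟩ a
      (ciSup_pos (f := fun _ => f a) (Set.mem_singleton a)).ge)

theorem frontier_compl_singleton {X : Type*} [TopologicalSpace X] [T1Space X] (a : X)
    [NeBot (𝓝[≠] a)] : frontier ({a}ᶜ : Set X) = {a} := by
  rw [frontier_compl, isClosed_singleton.frontier_eq, interior_singleton, Set.sdiff_empty]

theorem sMetric_compl_zero {n : ℕ} [Nontrivial (EuclideanSpace ℝ (Fin n))]
    (x y : EuclideanSpace ℝ (Fin n)) :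
    sMetric ({0}ᶜ : Set (EuclideanSpace ℝ (Fin n))) x y = dist x y / (‖x‖ + ‖y‖) := by
  rw [sMetric, frontier_compl_singleton, Real.biSup_singleton (by positivity), dist_zero_left,
    dist_zero_left]

section NormedSpace

variable {E : Type*}

theorem dist_div_norm_add_norm_lt_of_dist_lt [SeminormedAddCommGroup E] {x y : E} {r : ℝ}
    (hr : 0 < r) (h : dist x y < 2 * r / (1 + r) * ‖x‖) : dist x y / (‖x‖ + ‖y‖) < r := by
  rw [div_mul_eq_mul_div, lt_div_iff₀ (by positivity)] at h
  have hx : 0 < ‖x‖ := pos_of_mul_pos_right ((mul_nonneg dist_nonneg (by positivity)).trans_lt h)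
    (by positivity)
  rw [div_lt_iff₀ (by positivity)]
  nlinarith [norm_sub_norm_le x y, dist_eq_norm x y]

theorem dist_lt_of_dist_div_norm_add_norm_lt [SeminormedAddCommGroup E] {x y : E} {r : ℝ}
    (hr : r < 1) (hxy : 0 < ‖x‖ + ‖y‖) (h : dist x y / (‖x‖ + ‖y‖) < r) :
    dist x y < 2 * r / (1 - r) * ‖x‖ := by
  have hr0 : 0 < r := (div_nonneg dist_nonneg hxy.le).trans_lt h
  rw [div_lt_iff₀ hxy] at h
  rw [div_mul_eq_mul_div, lt_div_iff₀ (by linarith)]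
  nlinarith [norm_sub_norm_le y x, dist_eq_norm' x y]

theorem dist_smul_self [SeminormedAddCommGroup E] [NormedSpace ℝ E] (x : E) (t : ℝ) :
    dist x (t • x) = |1 - t| * ‖x‖ := by
  rw [dist_eq_norm, ← Real.norm_eq_abs, ← norm_smul, sub_smul, one_smul]

theorem dist_div_norm_add_norm_smul_self [NormedAddCommGroup E] [NormedSpace ℝ E] {x : E}
    (hx : x ≠ 0) {t : ℝ} (ht : 0 ≤ t) :
    dist x (t • x) / (‖x‖ + ‖t • x‖) = |1 - t| / (1 + t) := by
  rw [dist_smul_self, norm_smul, Real.norm_eq_abs, abs_of_nonneg ht, ← one_add_mul,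
    mul_div_mul_right _ _ (norm_ne_zero_iff.2 hx)]

end NormedSpace

theorem ball_subset_sBall_punctured_sharp_general (n : ℕ)
    (x : EuclideanSpace ℝ (Fin n)) (hx : x ≠ 0) (r : ℝ) (hr : r ∈ Set.Ioo (0:ℝ) 1) :
    Metric.ball x (2 * r / (1 + r) * ‖x‖) ⊆
      sBall ({0}ᶜ : Set (EuclideanSpace ℝ (Fin n))) x r ∧
    sBall ({0}ᶜ : Set (EuclideanSpace ℝ (Fin n))) x r ⊆
      Metric.ball x (2 * r / (1 - r) * ‖x‖) ∧
    (dist x ((1 - 2 * r / (1 + r)) • x) = 2 * r / (1 + r) * ‖x‖ ∧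
      sMetric ({0}ᶜ : Set (EuclideanSpace ℝ (Fin n))) x ((1 - 2 * r / (1 + r)) • x) = r) ∧
    (dist x ((1 + 2 * r / (1 - r)) • x) = 2 * r / (1 - r) * ‖x‖ ∧
      sMetric ({0}ᶜ : Set (EuclideanSpace ℝ (Fin n))) x ((1 + 2 * r / (1 - r)) • x) = r) := by
  obtain ⟨hr0, hr1⟩ := hr
  have : Nontrivial (EuclideanSpace ℝ (Fin n)) := ⟨⟨x, 0, hx⟩⟩
  have ht₁ : 0 ≤ 1 - 2 * r / (1 + r) := by
    rw [sub_nonneg, div_le_one (by linarith)]; linarith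
  have habs₁ : |1 - (1 - 2 * r / (1 + r))| = 2 * r / (1 + r) := by
    rw [sub_sub_cancel, abs_of_pos (by positivity)]
  have habs₂ : |1 - (1 + 2 * r / (1 - r))| = 2 * r / (1 - r) := by
    rw [sub_add_cancel_left, abs_neg, abs_of_pos (div_pos (by positivity) (by linarith))]
  refine ⟨fun y hy => ⟨?_, ?_⟩, fun y ⟨hy, hs⟩ => ?_, ⟨?_, ?_⟩, ⟨?_, ?_⟩⟩
  · rintro rfl
    rw [Metric.mem_ball, dist_zero_left] at hy
    exact hy.not_ge (mul_le_of_le_one_left (norm_nonneg x) (by linarith))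
  · rw [sMetric_compl_zero]
    exact dist_div_norm_add_norm_lt_of_dist_lt hr0 (dist_comm x y ▸ hy)
  · rw [sMetric_compl_zero] at hs
    rw [Metric.mem_ball, dist_comm]
    exact dist_lt_of_dist_div_norm_add_norm_lt hr1
      (add_pos_of_nonneg_of_pos (norm_nonneg x) (norm_pos_iff.2 hy)) hs
  · rw [dist_smul_self, habs₁]
  · rw [sMetric_compl_zero, dist_div_norm_add_norm_smul_self hx ht₁, habs₁]
    field_simp; ring
  · rw [dist_smul_self, habs₂]
  · rw [sMetric_compl_zero, dist_div_norm_add_norm_smul_self hx (by positivity), habs₂]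
    field_simp; ring

/-- Let n ≥ 1, G = ℝⁿ \ {0}, x ∈ G, and r ∈ (0,1). Then
B(x, (2r/(1+r))·|x|) ⊆ B_s(x,r) ⊆ B(x, (2r/(1−r))·|x|), and both inclusions are sharp:
y₁ = (1 − 2r/(1+r))·x satisfies |x − y₁| = (2r/(1+r))·|x| and s_G(x, y₁) = r, and
y₂ = (1 + 2r/(1−r))·x satisfies |x − y₂| = (2r/(1−r))·|x| and s_G(x, y₂) = r. -/
theorem ball_subset_sBall_punctured_sharp (n : ℕ) (hn : 1 ≤ n)
    (x : EuclideanSpace ℝ (Fin n)) (hx : x ≠ 0) (r : ℝ) (hr : r ∈ Set.Ioo (0:ℝ) 1) :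
    Metric.ball x (2 * r / (1 + r) * ‖x‖) ⊆
      sBall ({0}ᶜ : Set (EuclideanSpace ℝ (Fin n))) x r ∧
    sBall ({0}ᶜ : Set (EuclideanSpace ℝ (Fin n))) x r ⊆
      Metric.ball x (2 * r / (1 - r) * ‖x‖) ∧
    (dist x ((1 - 2 * r / (1 + r)) • x) = 2 * r / (1 + r) * ‖x‖ ∧
      sMetric ({0}ᶜ : Set (EuclideanSpace ℝ (Fin n))) x ((1 - 2 * r / (1 + r)) • x) = r) ∧
    (dist x ((1 + 2 * r / (1 - r)) • x) = 2 * r / (1 - r) * ‖x‖ ∧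
      sMetric ({0}ᶜ : Set (EuclideanSpace ℝ (Fin n))) x ((1 + 2 * r / (1 - r)) • x) = r) :=
  ball_subset_sBall_punctured_sharp_general n x hx r hr
end
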